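/- arXiv:2110.00231 — 3 statements merged into one kernel-verified Lean document; each statement's English description precedes it below -/
import Mathlib

section
/- For any positive integers p and q, the product ζ(p+1)·ζ(q+1) equals the sum over all pairs of positive integers (α₁, α₂) with α₁+α₂ = p+q+1 of (C(α₂,p) + C(α₂,q))·ζ(α₁, α₂+1), where C denotes the binomial coefficient. -/
open Filter

/-- Limit of partial sums (handles conditionally convergent series). -/
noncomputable def plim (f : ℕ → ℝ) : ℝ := limUnder atTop f

/-- Riemann zeta value `ζ(s) = ∑_{k ≥ 1} 1/k^s`. -/
noncomputable def zetaV (s : ℕ) : ℝ :=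
  plim fun N => ∑ k ∈ Finset.Ico 1 (N + 1), 1 / (k : ℝ) ^ s

/-- Alternating zeta value `ζ̄(s) = ∑_{k ≥ 1} (-1)^k/k^s`. -/
noncomputable def zetaBar (s : ℕ) : ℝ :=
  plim fun N => ∑ k ∈ Finset.Ico 1 (N + 1), (-1 : ℝ) ^ k / (k : ℝ) ^ s

/-- Double zeta value `ζ(a,b) = ∑_{1 ≤ k₁ < k₂} 1/(k₁^a k₂^b)`. -/
noncomputable def zeta2 (a b : ℕ) : ℝ :=
  plim fun N => ∑ k₂ ∈ Finset.Ico 1 (N + 1), ∑ k₁ ∈ Finset.Ico 1 k₂,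
    1 / ((k₁ : ℝ) ^ a * (k₂ : ℝ) ^ b)

/-- `ζ(a, b̄) = ∑_{1 ≤ k₁ < k₂} (-1)^{k₂}/(k₁^a k₂^b)` (sign on the outer index). -/
noncomputable def zeta2barO (a b : ℕ) : ℝ :=
  plim fun N => ∑ k₂ ∈ Finset.Ico 1 (N + 1), ∑ k₁ ∈ Finset.Ico 1 k₂,
    (-1 : ℝ) ^ k₂ / ((k₁ : ℝ) ^ a * (k₂ : ℝ) ^ b)

/-- `ζ(ā, b) = ∑_{1 ≤ k₁ < k₂} (-1)^{k₁}/(k₁^a k₂^b)` (sign on the inner index). -/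
noncomputable def zeta2barI (a b : ℕ) : ℝ :=
  plim fun N => ∑ k₂ ∈ Finset.Ico 1 (N + 1), ∑ k₁ ∈ Finset.Ico 1 k₂,
    (-1 : ℝ) ^ k₁ / ((k₁ : ℝ) ^ a * (k₂ : ℝ) ^ b)

/-- `ζ(ā, b̄) = ∑_{1 ≤ k₁ < k₂} (-1)^{k₁+k₂}/(k₁^a k₂^b)`. -/
noncomputable def zeta2barB (a b : ℕ) : ℝ :=
  plim fun N => ∑ k₂ ∈ Finset.Ico 1 (N + 1), ∑ k₁ ∈ Finset.Ico 1 k₂,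
    (-1 : ℝ) ^ (k₁ + k₂) / ((k₁ : ℝ) ^ a * (k₂ : ℝ) ^ b)

/-- Multiple zeta value `ζ(α₁,…,α_r)`. -/
noncomputable def mzv {r : ℕ} (α : Fin r → ℕ) : ℝ :=
  ∑' k : {f : Fin r → ℕ // StrictMono f ∧ ∀ i, 1 ≤ f i},
    ∏ i, 1 / ((k.1 i : ℝ) ^ α i)

/-- Multiple zeta-star value `ζ⋆(α₁,…,α_r)`. -/
noncomputable def mzvStar {r : ℕ} (α : Fin r → ℕ) : ℝ :=
  ∑' k : {f : Fin r → ℕ // Monotone f ∧ ∀ i, 1 ≤ f i},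
    ∏ i, 1 / ((k.1 i : ℝ) ^ α i)

/-- Height-one MZV `ζ({1}^a, b+2)`. -/
noncomputable def heightOne (a b : ℕ) : ℝ :=
  mzv (Fin.snoc (fun _ : Fin a => 1) (b + 2))

/-- Height-one zeta-star value `ζ⋆({1}^a, b+2)`. -/
noncomputable def heightOneStar (a b : ℕ) : ℝ :=
  mzvStar (Fin.snoc (fun _ : Fin a => 1) (b + 2))

/-!
With `u = x/(x+y)` and `v = y/(x+y)`, the identity
`v^(q+1) ∑_{s ≤ p} C(q+s,s) u^s + u^(p+1) ∑_{s ≤ q} C(p+s,s) v^s = 1`, valid whenever `u + v = 1`,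
is a partial fraction decomposition of `1/(x^(p+1) y^(q+1))` into terms `1/(x^α (x+y)^β)` and
`1/(y^α (x+y)^β)` with `α + β = p + q + 2`. Summing it over all `x, y ≥ 1` with `k₁ = x` (resp. `y`)
and `k₂ = x + y` gives the formula; every series involved has nonnegative terms and converges, so
the terms may be regrouped freely.
-/

open Finset Topology

section PartialFractions

variable {R : Type*} [CommRing R]

theorem one_sub_mul_sum_choose_succ_mul_pow (v : R) (p q : ℕ) :
    (1 - v) * ∑ s ∈ range (q + 1), ((p + 1 + s).choose s : R) * v ^ s =
      ∑ s ∈ range (q + 1), ((p + s).choose s : R) * v ^ s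
        - ((p + 1 + q).choose q : R) * v ^ (q + 1) := by
  induction q with
  | zero => simp
  | succ q ih =>
    rw [sum_range_succ _ (q + 1), mul_add, ih, sum_range_succ _ (q + 1),
      show p + 1 + (q + 1) = p + 1 + q + 1 by ring, Nat.choose_succ_succ',
      show p + (q + 1) = p + 1 + q by ring]
    push_cast
    ring

theorem pow_mul_sum_choose_mul_pow_add_pow_mul_sum_choose_mul_pow {u v : R} (h : u + v = 1)
    (p q : ℕ) :
    v ^ (q + 1) * ∑ s ∈ range (p + 1), ((q + s).choose s : R) * u ^ s
      + u ^ (p + 1) * ∑ s ∈ range (q + 1), ((p + s).choose s : R) * v ^ s = 1 := by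
  obtain rfl : u = 1 - v := eq_sub_of_add_eq h
  induction p with
  | zero => simp [mul_neg_geom_sum]
  | succ p ih =>
    have hstep := one_sub_mul_sum_choose_succ_mul_pow v p q
    rw [sum_range_succ, add_comm q (p + 1), Nat.choose_symm_add]
    linear_combination ih + (1 - v) ^ (p + 1) * hstep

theorem sum_range_choose_smul_reflect {M : Type*} [AddCommMonoid M] (f : ℕ → ℕ → M) (p : ℕ)
    {q : ℕ} (hq : 0 < q) :
    ∑ s ∈ range (p + 1), (q + s).choose s • f (p + 1 - s) (q + 1 + s)
      = ∑ α ∈ Ico 1 (p + q + 1), (p + q + 1 - α).choose q • f α (p + q + 1 - α + 1) := by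
  have hvanish : ∀ α ∈ Ico 1 (p + q + 1), α ∉ Ico 1 (p + 2) →
      (p + q + 1 - α).choose q • f α (p + q + 1 - α + 1) = 0 := by
    intro α hα hα'
    rw [mem_Ico] at hα hα'
    rw [Nat.choose_eq_zero_of_lt (by omega), zero_smul]
  rw [← sum_subset (Ico_subset_Ico_right (by omega)) hvanish]
  refine sum_nbij' (fun s => p + 1 - s) (fun α => p + 1 - α) ?_ ?_ ?_ ?_ ?_ <;>
    intro s hs <;> simp only [mem_range, mem_Ico] at hs ⊢
  any_goals omega
  rw [show p + q + 1 - (p + 1 - s) = q + s by omega, Nat.choose_symm_add,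
    show q + s + 1 = q + 1 + s by omega]

variable {K : Type*} [Field K]

theorem one_div_pow_mul_pow_eq_sum_range {x y : K} (hx : x ≠ 0) (hy : y ≠ 0) (hxy : x + y ≠ 0)
    (p q : ℕ) :
    1 / (x ^ (p + 1) * y ^ (q + 1))
      = ∑ s ∈ range (p + 1), ((q + s).choose s : K) / (x ^ (p + 1 - s) * (x + y) ^ (q + 1 + s))
        + ∑ s ∈ range (q + 1),
            ((p + s).choose s : K) / (y ^ (q + 1 - s) * (x + y) ^ (p + 1 + s)) := by
  have hterm : ∀ (a b : K) (m k s : ℕ) (c : K), a ≠ 0 → b ≠ 0 → s ≤ m →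
      (b / (x + y)) ^ k * (c * (a / (x + y)) ^ s) / (a ^ m * b ^ k)
        = c / (a ^ (m - s) * (x + y) ^ (k + s)) := by
    intro a b m k s c ha hb hs
    rw [← Nat.sub_add_cancel hs, pow_add a, Nat.sub_add_cancel hs, div_pow, div_pow, pow_add]
    field_simp
  have hid := pow_mul_sum_choose_mul_pow_add_pow_mul_sum_choose_mul_pow
    (u := x / (x + y)) (v := y / (x + y)) (by field_simp) p q
  calc 1 / (x ^ (p + 1) * y ^ (q + 1))
      = ((y / (x + y)) ^ (q + 1) * ∑ s ∈ range (p + 1), ((q + s).choose s : K) * (x / (x + y)) ^ s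
          + (x / (x + y)) ^ (p + 1)
            * ∑ s ∈ range (q + 1), ((p + s).choose s : K) * (y / (x + y)) ^ s)
          / (x ^ (p + 1) * y ^ (q + 1)) := by rw [hid]
    _ = _ := by
      rw [add_div, mul_sum, mul_sum, sum_div, sum_div]
      congr 1 <;> refine sum_congr rfl fun s hs => ?_ <;> rw [mem_range] at hs
      · exact hterm x y (p + 1) (q + 1) s _ hx hy hs.le
      · rw [mul_comm (x ^ _)]
        exact hterm y x (q + 1) (p + 1) s _ hy hx hs.le

theorem one_div_pow_mul_pow_eq_sum_Ico {x y : K} (hx : x ≠ 0) (hy : y ≠ 0) (hxy : x + y ≠ 0)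
    {p q : ℕ} (hp : 0 < p) (hq : 0 < q) :
    1 / (x ^ (p + 1) * y ^ (q + 1))
      = ∑ α ∈ Ico 1 (p + q + 1),
          (((p + q + 1 - α).choose q : K) / (x ^ α * (x + y) ^ (p + q + 1 - α + 1))
            + ((p + q + 1 - α).choose p : K) / (y ^ α * (x + y) ^ (p + q + 1 - α + 1))) := by
  have hx_side := sum_range_choose_smul_reflect (fun a b => 1 / (x ^ a * (x + y) ^ b)) p hq
  have hy_side := sum_range_choose_smul_reflect (fun a b => 1 / (y ^ a * (x + y) ^ b)) q hp
  rw [add_comm q p] at hy_side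
  simp only [nsmul_eq_mul, mul_one_div] at hx_side hy_side
  rw [one_div_pow_mul_pow_eq_sum_range hx hy hxy, sum_add_distrib, hx_side, hy_side]

end PartialFractions

section Triangle

variable {M : Type*} [AddCommMonoid M] [TopologicalSpace M] [ContinuousAdd M] [RegularSpace M]

theorem HasSum.sum_antidiagonal {A : Type*} [AddCommMonoid A] [HasAntidiagonal A]
    {f : A × A → M} {a : M} (h : HasSum f a) :
    HasSum (fun n => ∑ z ∈ antidiagonal n, f z) a :=
  (HasAntidiagonal.sigmaAntidiagonalEquivProd.hasSum_iff.2 h).sigma fun _ => Finset.hasSum _ _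

theorem HasSum.tendsto_sum_Ico_sum_Ico {g : ℕ → ℕ → M} {a : M}
    (h : HasSum (fun z : ℕ × ℕ => g (z.1 + 1) (z.1 + z.2 + 2)) a) :
    Tendsto (fun N => ∑ k₂ ∈ Ico 1 (N + 1), ∑ k₁ ∈ Ico 1 k₂, g k₁ k₂) atTop (𝓝 a) := by
  rw [← tendsto_add_atTop_iff_nat 1]
  refine h.sum_antidiagonal.tendsto_sum_nat.congr fun N => ?_
  rw [sum_Ico_eq_sum_range, Nat.add_sub_cancel, sum_range_succ', Ico_self, sum_empty, add_zero]
  refine sum_congr rfl fun n _ => ?_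
  rw [Nat.sum_antidiagonal_eq_sum_range_succ_mk, sum_Ico_eq_sum_range]
  refine sum_congr (by congr 1; omega) fun k hk => ?_
  rw [mem_range] at hk
  congr 1 <;> omega

end Triangle

/-- The summand `1/(k₁ k₂²)` of `ζ(1, 2)` is not dominated by a product `f k₁ · g (k₂ - k₁)` of
integer powers with summable factors; exponents `3/2` work. -/
theorem rpow_three_halves_mul_rpow_three_halves_le {x y : ℝ} (hx : 1 ≤ x) (hy : 0 ≤ y) {a b : ℕ}
    (ha : 1 ≤ a) (hb : 2 ≤ b) :
    x ^ (3 / 2 : ℝ) * y ^ (3 / 2 : ℝ) ≤ x ^ a * (x + y) ^ b := by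
  have hx0 : 0 ≤ x := by linarith
  have hxy : 1 ≤ x + y := by linarith
  calc x ^ (3 / 2 : ℝ) * y ^ (3 / 2 : ℝ)
      ≤ x ^ (3 / 2 : ℝ) * (x + y) ^ (3 / 2 : ℝ) := by gcongr; linarith
    _ = x * (x ^ (1 / 2 : ℝ) * (x + y) ^ (3 / 2 : ℝ)) := by
      rw [show (3 / 2 : ℝ) = 1 + 1 / 2 by norm_num, Real.rpow_add' hx0 (by norm_num),
        Real.rpow_one]
      ring
    _ ≤ x * ((x + y) ^ (1 / 2 : ℝ) * (x + y) ^ (3 / 2 : ℝ)) := by gcongr; linarith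
    _ = x ^ 1 * (x + y) ^ 2 := by
      rw [← Real.rpow_add (by linarith), ← Real.rpow_natCast]; norm_num
    _ ≤ x ^ a * (x + y) ^ b := by gcongr

theorem summable_one_div_succ_pow {s : ℕ} (hs : 2 ≤ s) :
    Summable fun k : ℕ => 1 / ((k + 1 : ℕ) : ℝ) ^ s :=
  (summable_nat_add_iff 1).2 (Real.summable_one_div_nat_pow.2 hs)

theorem zetaV_eq_tsum {s : ℕ} (hs : 2 ≤ s) : zetaV s = ∑' k : ℕ, 1 / ((k + 1 : ℕ) : ℝ) ^ s := by
  refine Tendsto.limUnder_eq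
    ((summable_one_div_succ_pow hs).hasSum.tendsto_sum_nat.congr fun N => ?_)
  rw [range_eq_Ico, sum_Ico_add' (fun k : ℕ => 1 / (k : ℝ) ^ s)]

theorem zetaV_mul_zetaV {P Q : ℕ} (hP : 2 ≤ P) (hQ : 2 ≤ Q) :
    zetaV P * zetaV Q = ∑' z : ℕ × ℕ, 1 / (((z.1 + 1 : ℕ) : ℝ) ^ P * ((z.2 + 1 : ℕ) : ℝ) ^ Q) := by
  have hfP := summable_one_div_succ_pow hP
  have hfQ := summable_one_div_succ_pow hQ
  rw [zetaV_eq_tsum hP, zetaV_eq_tsum hQ,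
    hfP.tsum_mul_tsum hfQ (hfP.mul_of_nonneg hfQ (fun _ => by positivity) fun _ => by positivity)]
  simp only [div_mul_div_comm, one_mul]

/-- The summand of `ζ(a, b)` at `k₁ = i + 1`, `k₂ = i + j + 2`, indexed by `z = (i, j)`. -/
noncomputable def doubleZetaSummand (a b : ℕ) (z : ℕ × ℕ) : ℝ :=
  1 / (((z.1 + 1 : ℕ) : ℝ) ^ a * ((z.1 + z.2 + 2 : ℕ) : ℝ) ^ b)

theorem summable_doubleZetaSummand {a b : ℕ} (ha : 1 ≤ a) (hb : 2 ≤ b) :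
    Summable (doubleZetaSummand a b) := by
  have hf : Summable fun k : ℕ => 1 / ((k + 1 : ℕ) : ℝ) ^ (3 / 2 : ℝ) :=
    (summable_nat_add_iff 1).2 (Real.summable_one_div_nat_rpow.2 (by norm_num))
  refine Summable.of_nonneg_of_le (fun _ => by unfold doubleZetaSummand; positivity) (fun z => ?_)
    (hf.mul_of_nonneg hf (fun _ => by positivity) fun _ => by positivity)
  have hsum : ((z.1 + z.2 + 2 : ℕ) : ℝ) = ((z.1 + 1 : ℕ) : ℝ) + ((z.2 + 1 : ℕ) : ℝ) := by
    push_cast; ring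
  rw [doubleZetaSummand, div_mul_div_comm, one_mul, hsum]
  exact one_div_le_one_div_of_le (by positivity)
    (rpow_three_halves_mul_rpow_three_halves_le (by simp) (by positivity) ha hb)

theorem zeta2_eq_tsum {a b : ℕ} (ha : 1 ≤ a) (hb : 2 ≤ b) :
    zeta2 a b = ∑' z, doubleZetaSummand a b z :=
  ((summable_doubleZetaSummand ha hb).hasSum.tendsto_sum_Ico_sum_Ico
    (g := fun k₁ k₂ => 1 / ((k₁ : ℝ) ^ a * (k₂ : ℝ) ^ b))).limUnder_eq

theorem zeta2_eq_tsum_swap {a b : ℕ} (ha : 1 ≤ a) (hb : 2 ≤ b) :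
    zeta2 a b = ∑' z : ℕ × ℕ, doubleZetaSummand a b z.swap := by
  rw [zeta2_eq_tsum ha hb, ← (Equiv.prodComm ℕ ℕ).tsum_eq]
  rfl

theorem euler_decomposition (p q : ℕ) (hp : 0 < p) (hq : 0 < q) :
    zetaV (p + 1) * zetaV (q + 1) =
      ∑ α₁ ∈ Finset.Ico 1 (p + q + 1),
        ((Nat.choose (p + q + 1 - α₁) p : ℝ) + (Nat.choose (p + q + 1 - α₁) q : ℝ)) *
          zeta2 α₁ (p + q + 1 - α₁ + 1) := by
  have hsplit (z : ℕ × ℕ) : 1 / (((z.1 + 1 : ℕ) : ℝ) ^ (p + 1) * ((z.2 + 1 : ℕ) : ℝ) ^ (q + 1)) =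
      ∑ α₁ ∈ Ico 1 (p + q + 1),
        ((Nat.choose (p + q + 1 - α₁) q : ℝ) * doubleZetaSummand α₁ (p + q + 1 - α₁ + 1) z
          + (Nat.choose (p + q + 1 - α₁) p : ℝ)
            * doubleZetaSummand α₁ (p + q + 1 - α₁ + 1) z.swap) := by
    have hsum : ((z.1 + 1 : ℕ) : ℝ) + ((z.2 + 1 : ℕ) : ℝ) = ((z.1 + z.2 + 2 : ℕ) : ℝ) := by
      push_cast; ring
    rw [one_div_pow_mul_pow_eq_sum_Ico (by positivity) (by positivity) (by positivity) hp hq, hsum]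
    simp only [doubleZetaSummand, Prod.fst_swap, Prod.snd_swap, add_comm z.2 z.1, mul_one_div]
  have hbounds {α₁ : ℕ} (hα₁ : α₁ ∈ Ico 1 (p + q + 1)) : 1 ≤ α₁ ∧ 2 ≤ p + q + 1 - α₁ + 1 := by
    rw [mem_Ico] at hα₁; omega
  rw [zetaV_mul_zetaV (by omega) (by omega), tsum_congr hsplit, Summable.tsum_finsetSum]
  · refine sum_congr rfl fun α₁ hα₁ => ?_
    obtain ⟨ha, hb⟩ := hbounds hα₁
    have hs := summable_doubleZetaSummand ha hb
    rw [(hs.mul_left _).tsum_add (hs.prod_symm.mul_left _), tsum_mul_left, tsum_mul_left,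
      ← zeta2_eq_tsum ha hb, ← zeta2_eq_tsum_swap ha hb]
    ring
  · intro α₁ hα₁
    have hs := summable_doubleZetaSummand (hbounds hα₁).1 (hbounds hα₁).2
    exact (hs.mul_left _).add (hs.prod_symm.mul_left _)
end

section
/- For any nonnegative integer r, ∑_{α₁+α₂=r+3} ζ(α₁, α₂+1) = ζ(r+4), where the sum is over pairs of positive integers (α₁, α₂) with α₁+α₂ = r+3. -/
open Filter

/-!
For `1 ≤ k < n` the terms telescope (a finite geometric sum):
`∑_{a=1}^{s-1} 1/(k^a n^(s+1-a)) = 1/((n-k) k^(s-1) n) - 1/((n-k) n^s)`.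
Summed over `n ≤ N`, the second part is the partial sum of `ζ(1,s)` after `k ↦ n - k`. For the
first, partial fractions in `n` give `∑_{k ≤ N} (H_k - (H_N - H_(N-k)))/k^s`, and
`∑ H_k/k^s` is the partial sum of `ζ(1,s) + ζ(s+1)`. So the partial sums of the left side equal
those of `ζ(s+1)` up to `∑_k (H_N - H_(N-k))/k^s ≤ 2 H_N/(N+1) → 0`. As all terms are nonnegative,
the same identity bounds each partial double sum, so every `ζ(a, s+1-a)` converges.
-/

open Topology Finset

noncomputable def zetaPartial (s N : ℕ) : ℝ :=
  ∑ k ∈ Ico 1 (N + 1), 1 / (k : ℝ) ^ s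

noncomputable def zeta2Partial (a b N : ℕ) : ℝ :=
  ∑ k₂ ∈ Ico 1 (N + 1), ∑ k₁ ∈ Ico 1 k₂, 1 / ((k₁ : ℝ) ^ a * (k₂ : ℝ) ^ b)

noncomputable def harmonicDiffSum (s N : ℕ) : ℝ :=
  ∑ k ∈ Ico 1 (N + 1), ((harmonic N : ℝ) - harmonic (N - k)) / (k : ℝ) ^ s

lemma tendsto_plim_of_monotone {f : ℕ → ℝ} (hf : Monotone f) (hb : BddAbove (Set.range f)) :
    Tendsto f atTop (𝓝 (plim f)) :=
  tendsto_nhds_limUnder ⟨_, tendsto_atTop_ciSup hf hb⟩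

lemma zetaPartial_mono (s : ℕ) : Monotone (zetaPartial s) := fun _ _ h =>
  sum_le_sum_of_subset_of_nonneg (Ico_subset_Ico_right (by omega)) fun _ _ _ => by positivity

lemma zetaPartial_le_tsum {s : ℕ} (hs : 1 < s) (N : ℕ) :
    zetaPartial s N ≤ ∑' k : ℕ, 1 / (k : ℝ) ^ s :=
  (Real.summable_one_div_nat_pow.mpr hs).sum_le_tsum _ fun _ _ => by positivity

lemma tendsto_zetaPartial {s : ℕ} (hs : 1 < s) :
    Tendsto (zetaPartial s) atTop (𝓝 (zetaV s)) :=
  tendsto_plim_of_monotone (zetaPartial_mono s)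
    ⟨_, Set.forall_mem_range.2 (zetaPartial_le_tsum hs)⟩

lemma zeta2Partial_nonneg (a b N : ℕ) : 0 ≤ zeta2Partial a b N :=
  sum_nonneg fun _ _ => sum_nonneg fun _ _ => by positivity

lemma zeta2Partial_mono (a b : ℕ) : Monotone (zeta2Partial a b) := fun _ _ h =>
  sum_le_sum_of_subset_of_nonneg (Ico_subset_Ico_right (by omega)) fun _ _ _ =>
    sum_nonneg fun _ _ => by positivity

lemma sub_mul_sum_Ico_pow_mul_pow {R : Type*} [CommRing R] (x y : R) {s : ℕ} (hs : 1 ≤ s) :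
    (x - y) * ∑ a ∈ Ico 1 s, x ^ a * y ^ (s - a + 1) = x ^ s * y ^ 2 - x * y ^ (s + 1) := by
  induction s, hs using Nat.le_induction with
  | base => simp
  | succ s hs ih =>
    have hshift : ∑ a ∈ Ico 1 s, x ^ a * y ^ (s + 1 - a + 1) =
        y * ∑ a ∈ Ico 1 s, x ^ a * y ^ (s - a + 1) := by
      rw [mul_sum]
      refine sum_congr rfl fun a ha => ?_
      rw [show s + 1 - a + 1 = s - a + 1 + 1 by grind]
      ring
    rw [sum_Ico_succ_top (by omega), hshift, show s + 1 - s + 1 = 2 by omega]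
    linear_combination y * ih

lemma sum_Ico_one_div_pow_mul_pow {s k n : ℕ} (hs : 1 ≤ s) (hk : 0 < k) (hkn : k < n) :
    ∑ a ∈ Ico 1 s, 1 / ((k : ℝ) ^ a * (n : ℝ) ^ (s - a + 1)) =
      1 / (((n - k : ℕ) : ℝ) * k ^ (s - 1) * n) - 1 / (((n - k : ℕ) : ℝ) * n ^ s) := by
  obtain ⟨t, rfl⟩ : ∃ t, s = t + 1 := ⟨s - 1, by omega⟩
  have hk' : (k : ℝ) ≠ 0 := by positivity
  have hn' : (n : ℝ) ≠ 0 := by norm_cast; omega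
  have hnk : (n : ℝ) - k ≠ 0 := by rw [sub_ne_zero, Ne, Nat.cast_inj]; omega
  have hne : (k : ℝ)⁻¹ - (n : ℝ)⁻¹ ≠ 0 := by
    rw [sub_ne_zero, Ne, inv_inj, Nat.cast_inj]; omega
  have key := sub_mul_sum_Ico_pow_mul_pow (k : ℝ)⁻¹ (n : ℝ)⁻¹ hs
  rw [sum_congr rfl fun a _ => by rw [one_div, mul_inv, ← inv_pow, ← inv_pow],
    eq_div_of_mul_eq hne ((mul_comm _ _).trans key), Nat.cast_sub hkn.le, Nat.add_sub_cancel]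
  simp only [inv_pow]
  field_simp
  ring

lemma harmonic_eq_sum_Ico (n : ℕ) : (harmonic n : ℝ) = ∑ k ∈ Ico 1 (n + 1), 1 / (k : ℝ) := by
  rw [harmonic_eq_sum_Icc, Ico_add_one_right_eq_Icc]
  push_cast
  simp only [one_div]

lemma sum_Ico_one_div_sub_one_div_add (M k : ℕ) :
    ∑ m ∈ Ico 1 (M + 1), (1 / (m : ℝ) - 1 / ((m + k : ℕ) : ℝ)) =
      harmonic M + harmonic k - harmonic (M + k) := by
  induction M with
  | zero => simp
  | succ M ih =>
    rw [sum_Ico_succ_top (by omega), ih, Nat.add_right_comm, harmonic_succ, harmonic_succ]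
    push_cast
    ring

lemma sum_Ico_one_div_sub_mul_pow_mul (t : ℕ) {k N : ℕ} (hk : 0 < k) (hkN : k ≤ N) :
    ∑ n ∈ Ico (k + 1) (N + 1), 1 / (((n - k : ℕ) : ℝ) * k ^ t * n) =
      (harmonic (N - k) + harmonic k - harmonic N) / (k : ℝ) ^ (t + 1) := by
  have h := sum_Ico_one_div_sub_one_div_add (N - k) k
  rw [Nat.sub_add_cancel hkN] at h
  rw [← h, sum_div, show Ico (k + 1) (N + 1) = Ico (1 + k) (N - k + 1 + k) by congr 1 <;> omega,
    ← sum_Ico_add']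
  refine sum_congr rfl fun m hm => ?_
  have hm' : (m : ℝ) ≠ 0 := by norm_cast; grind
  have hk' : (k : ℝ) ≠ 0 := by positivity
  have hmk : (m : ℝ) + k ≠ 0 := by positivity
  rw [Nat.add_sub_cancel]
  push_cast
  field_simp
  ring

lemma sum_harmonic_div_pow (s N : ℕ) :
    ∑ k ∈ Ico 1 (N + 1), (harmonic k : ℝ) / (k : ℝ) ^ s =
      zeta2Partial 1 s N + zetaPartial (s + 1) N := by
  rw [zeta2Partial, zetaPartial, ← sum_add_distrib]
  refine sum_congr rfl fun k hk => ?_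
  rw [harmonic_eq_sum_Ico, sum_Ico_succ_top (mem_Ico.1 hk).1, add_div, sum_div, pow_succ']
  simp only [pow_one, div_div]

lemma sum_sum_one_div_sub_mul_pow (s N : ℕ) :
    ∑ n ∈ Ico 1 (N + 1), ∑ k ∈ Ico 1 n, 1 / (((n - k : ℕ) : ℝ) * n ^ s) = zeta2Partial 1 s N :=
  sum_congr rfl fun n _ => by
    rw [sum_Ico_reflect (fun j => 1 / ((j : ℝ) * n ^ s)) 1 (Nat.le_succ n)]
    simp

lemma sum_sum_one_div_sub_mul_pow_mul (t N : ℕ) :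
    ∑ n ∈ Ico 1 (N + 1), ∑ k ∈ Ico 1 n, 1 / (((n - k : ℕ) : ℝ) * k ^ t * n) =
      zeta2Partial 1 (t + 1) N + zetaPartial (t + 2) N - harmonicDiffSum (t + 1) N := by
  rw [← sum_Ico_Ico_comm', ← sum_harmonic_div_pow, harmonicDiffSum, ← sum_sub_distrib]
  refine sum_congr rfl fun k hk => ?_
  rw [mem_Ico] at hk
  rw [sum_Ico_one_div_sub_mul_pow_mul t hk.1 (by omega)]
  ring

lemma sum_zeta2Partial_eq {s : ℕ} (hs : 1 ≤ s) (N : ℕ) :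
    ∑ a ∈ Ico 1 s, zeta2Partial a (s - a + 1) N =
      zetaPartial (s + 1) N - harmonicDiffSum s N := by
  obtain ⟨t, rfl⟩ : ∃ t, s = t + 1 := ⟨s - 1, by omega⟩
  calc ∑ a ∈ Ico 1 (t + 1), zeta2Partial a (t + 1 - a + 1) N
      = ∑ n ∈ Ico 1 (N + 1), ∑ k ∈ Ico 1 n, (1 / (((n - k : ℕ) : ℝ) * k ^ t * n) -
          1 / (((n - k : ℕ) : ℝ) * n ^ (t + 1))) := by
        simp only [zeta2Partial]
        rw [sum_comm]
        refine sum_congr rfl fun n _ => ?_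
        rw [sum_comm]
        refine sum_congr rfl fun k hk => ?_
        rw [sum_Ico_one_div_pow_mul_pow hs (mem_Ico.1 hk).1 (mem_Ico.1 hk).2, Nat.add_sub_cancel]
    _ = zetaPartial (t + 1 + 1) N - harmonicDiffSum (t + 1) N := by
        simp only [sum_sub_distrib]
        rw [sum_sum_one_div_sub_mul_pow_mul, sum_sum_one_div_sub_mul_pow]
        ring

lemma harmonic_sub_harmonic_sub_le {k N : ℕ} (hkN : k ≤ N) :
    (harmonic N : ℝ) - harmonic (N - k) ≤ k / ((N + 1 - k : ℕ) : ℝ) := by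
  have hpos : (0 : ℝ) < ((N + 1 - k : ℕ) : ℝ) := by norm_cast; omega
  have hrange : ∀ n, (harmonic n : ℝ) = ∑ i ∈ range n, 1 / ((i : ℝ) + 1) := fun n => by
    simp [harmonic]
  rw [hrange, hrange, ← sum_Ico_eq_sub _ (Nat.sub_le N k)]
  calc ∑ i ∈ Ico (N - k) N, 1 / ((i : ℝ) + 1)
      ≤ #(Ico (N - k) N) • (1 / ((N + 1 - k : ℕ) : ℝ)) := by
        refine sum_le_card_nsmul _ _ _ fun i hi => ?_
        gcongr
        rw [mem_Ico] at hi
        exact_mod_cast (by omega : N + 1 - k ≤ i + 1)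
    _ = k / ((N + 1 - k : ℕ) : ℝ) := by
        rw [Nat.card_Ico, nsmul_eq_mul, Nat.sub_sub_self hkN, mul_one_div]

lemma sum_Ico_one_div_mul_sub (M : ℕ) :
    ∑ k ∈ Ico 1 M, 1 / ((k : ℝ) * ((M - k : ℕ) : ℝ)) = 2 / M * ∑ k ∈ Ico 1 M, 1 / (k : ℝ) := by
  have hsplit : ∀ k ∈ Ico 1 M, 1 / ((k : ℝ) * ((M - k : ℕ) : ℝ)) =
      1 / M * (1 / (k : ℝ) + 1 / ((M - k : ℕ) : ℝ)) := fun k hk => by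
    rw [mem_Ico] at hk
    have hk' : (k : ℝ) ≠ 0 := by norm_cast; omega
    have hMk : ((M - k : ℕ) : ℝ) ≠ 0 := by norm_cast; omega
    have hM : (M : ℝ) = k + ((M - k : ℕ) : ℝ) := by rw [← Nat.cast_add]; congr 1; omega
    rw [hM]
    field_simp
    ring
  rw [sum_congr rfl hsplit, ← mul_sum, sum_add_distrib,
    sum_Ico_reflect (fun j => 1 / (j : ℝ)) 1 (Nat.le_succ M)]
  simp only [Nat.add_sub_cancel_left, Nat.add_sub_cancel]
  ring

lemma harmonicDiffSum_nonneg (s N : ℕ) : 0 ≤ harmonicDiffSum s N :=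
  sum_nonneg fun k _ => div_nonneg (sub_nonneg.2 (by
    rw [harmonic_eq_sum_Ico, harmonic_eq_sum_Ico]
    exact sum_le_sum_of_subset_of_nonneg (Ico_subset_Ico_right (by omega))
      fun _ _ _ => by positivity)) (by positivity)

lemma harmonicDiffSum_le {s : ℕ} (hs : 2 ≤ s) (N : ℕ) :
    harmonicDiffSum s N ≤ 2 / (N + 1 : ℕ) * harmonic N := by
  rw [harmonic_eq_sum_Ico, ← sum_Ico_one_div_mul_sub]
  refine sum_le_sum fun k hk => ?_
  rw [mem_Ico] at hk
  have hk' : (1 : ℝ) ≤ k := by exact_mod_cast hk.1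
  have hNk : (0 : ℝ) < ((N + 1 - k : ℕ) : ℝ) := by norm_cast; omega
  calc ((harmonic N : ℝ) - harmonic (N - k)) / (k : ℝ) ^ s
      ≤ k / ((N + 1 - k : ℕ) : ℝ) / (k : ℝ) ^ 2 := by
        gcongr
        exact harmonic_sub_harmonic_sub_le (by omega)
    _ = 1 / ((k : ℝ) * ((N + 1 - k : ℕ) : ℝ)) := by
        field_simp

lemma tendsto_harmonicDiffSum {s : ℕ} (hs : 2 ≤ s) :
    Tendsto (harmonicDiffSum s) atTop (𝓝 0) := by
  have hcesaro : Tendsto (fun N : ℕ => ((N + 1 : ℕ) : ℝ)⁻¹ * harmonic (N + 1)) atTop (𝓝 0) := by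
    have h := tendsto_one_div_add_atTop_nhds_zero_nat.cesaro.comp (tendsto_add_atTop_nat 1)
    refine h.congr fun N => ?_
    simp [harmonic]
  refine tendsto_of_tendsto_of_tendsto_of_le_of_le tendsto_const_nhds
    (by simpa only [mul_zero] using hcesaro.const_mul 2) (harmonicDiffSum_nonneg s) fun N => ?_
  calc harmonicDiffSum s N ≤ 2 / (N + 1 : ℕ) * harmonic N := harmonicDiffSum_le hs N
    _ = 2 * (((N + 1 : ℕ) : ℝ)⁻¹ * harmonic N) := by ring
    _ ≤ 2 * (((N + 1 : ℕ) : ℝ)⁻¹ * harmonic (N + 1)) := by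
        gcongr
        rw [harmonic_succ]
        push_cast
        exact le_add_of_nonneg_right (by positivity)

lemma zeta2Partial_le_zetaPartial {s a : ℕ} (ha : a ∈ Ico 1 s) (N : ℕ) :
    zeta2Partial a (s - a + 1) N ≤ zetaPartial (s + 1) N :=
  calc zeta2Partial a (s - a + 1) N
      ≤ ∑ a ∈ Ico 1 s, zeta2Partial a (s - a + 1) N :=
        single_le_sum (f := fun a => zeta2Partial a (s - a + 1) N)
          (fun _ _ => zeta2Partial_nonneg _ _ N) ha
    _ = zetaPartial (s + 1) N - harmonicDiffSum s N :=
        sum_zeta2Partial_eq ((mem_Ico.1 ha).1.trans (mem_Ico.1 ha).2.le) N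
    _ ≤ zetaPartial (s + 1) N := sub_le_self _ (harmonicDiffSum_nonneg s N)

theorem sum_zeta2_eq_zetaV {s : ℕ} (hs : 2 ≤ s) :
    ∑ a ∈ Ico 1 s, zeta2 a (s - a + 1) = zetaV (s + 1) := by
  have hlim : Tendsto (fun N => ∑ a ∈ Ico 1 s, zeta2Partial a (s - a + 1) N) atTop
      (𝓝 (zetaV (s + 1))) := by
    simp only [sum_zeta2Partial_eq (by omega : 1 ≤ s)]
    simpa using (tendsto_zetaPartial (by omega)).sub (tendsto_harmonicDiffSum hs)
  refine tendsto_nhds_unique (tendsto_finsetSum _ fun a ha => ?_) hlim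
  refine tendsto_plim_of_monotone (zeta2Partial_mono _ _) ⟨zetaV (s + 1), ?_⟩
  rintro _ ⟨N, rfl⟩
  exact (zeta2Partial_le_zetaPartial ha N).trans
    ((zetaPartial_mono _).ge_of_tendsto (tendsto_zetaPartial (by omega)) N)

theorem double_zeta_sum_formula (r : ℕ) :
    ∑ α₁ ∈ Finset.Ico 1 (r + 3), zeta2 α₁ (r + 3 - α₁ + 1) = zetaV (r + 4) :=
  sum_zeta2_eq_zetaV (by omega)
end

section
/- For any nonnegative integer m, the alternating sum ∑_{a+b=2m+1} (−1)^b · ζ({1}^a, b+2) equals 0, where the sum is over nonnegative integers a, b with a+b = 2m+1, and {1}^a means a repetitions of the argument 1. -/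
open Filter

/-!
Duality `ζ({1}^a, b+2) = ζ({1}^b, a+2)` pairs the term `(a, b)` of the sum with the term `(b, a)`,
and since `a + b` is odd the two carry opposite signs.

For duality, write `ζ({1}^a, b+2) = ∑_{n ≥ 1} e_a(n-1) / n^{b+2}`, where `e_a(n-1)` is the `a`-th
elementary symmetric function of `1, 1/2, …, 1/(n-1)`, and expand
`1/n^{b+2} = ∑_{k ≥ 1} (n-1)! (k-1)! / (n+k)! · e_b(k-1)`; this follows by induction on `b` from
telescoping the Beta values `B(n, k) = (n-1)! (k-1)! / (n+k-1)!`. The result is a double series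
symmetric under `(a, n) ↔ (b, k)`. All series have nonnegative terms and are summed in `ℝ≥0∞`,
where every rearrangement is free.
-/

open Topology Finset
open scoped ENNReal Nat

lemma Fin.strictMono_snoc_iff {α : Type*} [Preorder α] {n : ℕ} {f : Fin n → α} {a : α} :
    StrictMono (Fin.snoc f a : Fin (n + 1) → α) ↔ StrictMono f ∧ ∀ i, f i < a := by
  rw [← Fin.insertNth_last', Fin.strictMono_insertNth_iff]
  simp [Fin.castSucc_lt_last, (Fin.castSucc_lt_last _).not_ge]

lemma ENNReal.tsum_ite_strictMono_snoc {α : Type*} [Preorder α] [DecidableLT α] {n : ℕ}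
    (F : (Fin (n + 1) → α) → ℝ≥0∞) :
    ∑' f, (if StrictMono f then F f else 0) =
      ∑' a, ∑' g : Fin n → α, if StrictMono g ∧ ∀ i, g i < a then F (Fin.snoc g a) else 0 := by
  have snocEquiv_apply (p : α × (Fin n → α)) : Fin.snocEquiv (fun _ => α) p = Fin.snoc p.2 p.1 :=
    rfl
  rw [← (Fin.snocEquiv fun _ => α).tsum_eq, ENNReal.tsum_prod']
  simp only [snocEquiv_apply, Fin.strictMono_snoc_iff]

lemma ENNReal.tsum_mul_sum_range (f g : ℕ → ℝ≥0∞) :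
    ∑' k, f k * ∑ i ∈ range k, g i = ∑' i, g i * ∑' j, f (j + (i + 1)) := by
  calc ∑' k, f k * ∑ i ∈ range k, g i = ∑' k, ∑' i, if i < k then g i * f k else 0 := by
        refine tsum_congr fun k => ?_
        rw [mul_sum, sum_eq_tsum_indicator]
        simp [Set.indicator_apply, mul_comm]
    _ = ∑' i, ∑' k, if i < k then g i * f k else 0 := ENNReal.tsum_comm
    _ = ∑' i, g i * ∑' j, f (j + (i + 1)) := by
        refine tsum_congr fun i => ?_
        rw [← ENNReal.tsum_mul_left, ← ENNReal.summable.sum_add_tsum_nat_add' (k := i + 1)]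
        rw [sum_eq_zero fun k hk => if_neg (not_lt.2 (mem_range_succ_iff.1 hk)), zero_add]
        exact tsum_congr fun j => if_pos (by omega)

lemma ENNReal.ofReal_natCast_add_one (n : ℕ) : ENNReal.ofReal ((n : ℝ) + 1) = (n : ℝ≥0∞) + 1 := by
  exact_mod_cast ENNReal.ofReal_natCast (n + 1)

lemma hasSum_sub_succ_of_antitone {f : ℕ → ℝ} (hf : Antitone f) (hf0 : Tendsto f atTop (𝓝 0)) :
    HasSum (fun n => f n - f (n + 1)) (f 0) := by
  refine (hasSum_iff_tendsto_nat_of_nonneg (fun n => sub_nonneg.2 (hf n.le_succ)) _).2 ?_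
  simp_rw [sum_range_sub']
  simpa using tendsto_const_nhds.sub hf0

-- Both sides are `0` when the series diverges, so no convergence hypothesis is needed.
lemma mzv_eq_toReal_tsum {r : ℕ} (α : Fin r → ℕ) :
    mzv α = (∑' g : Fin r → ℕ,
      if StrictMono g then ∏ i, ((g i : ℝ≥0∞) + 1)⁻¹ ^ α i else 0).toReal := by
  have shift_mem (g : Fin r → ℕ) :
      g + 1 ∈ {f : Fin r → ℕ | StrictMono f ∧ ∀ i, 1 ≤ f i} ↔ StrictMono g := by
    simp [StrictMono]
  have range_shift : {f : Fin r → ℕ | StrictMono f ∧ ∀ i, 1 ≤ f i} ⊆ Set.range (· + 1) := by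
    intro f hf
    exact ⟨f - 1, funext fun i => Nat.sub_add_cancel (hf.2 i)⟩
  refine (tsum_subtype {f : Fin r → ℕ | StrictMono f ∧ ∀ i, 1 ≤ f i}
    fun f => ∏ i, 1 / ((f i : ℝ) ^ α i)).trans ?_
  rw [← (add_left_injective 1).tsum_eq ((Set.support_indicator_subset).trans range_shift),
    ENNReal.tsum_toReal_eq fun g => by
      split_ifs
      · exact ENNReal.prod_ne_top fun i _ => by simp
      · exact ENNReal.zero_ne_top]
  refine tsum_congr fun g => ?_
  simp only [Set.indicator_apply, shift_mem]
  split_ifs <;> simp [ENNReal.toReal_add]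

/-- `esymmInv r n` is the `r`-th elementary symmetric function of `1, 1/2, …, 1/n`. -/
noncomputable def esymmInv : ℕ → ℕ → ℝ≥0∞
  | 0, _ => 1
  | r + 1, n => ∑ k ∈ range n, esymmInv r k * ((k : ℝ≥0∞) + 1)⁻¹

lemma tsum_strictMono_lt_eq_esymmInv (r n : ℕ) :
    ∑' g : Fin r → ℕ, (if StrictMono g ∧ ∀ i, g i < n then ∏ i, ((g i : ℝ≥0∞) + 1)⁻¹ else 0) =
      esymmInv r n := by
  induction r generalizing n with
  | zero => simp [esymmInv, tsum_fintype, Subsingleton.strictMono]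
  | succ r ih =>
    have inner (a : ℕ) : (∑' g : Fin r → ℕ, if StrictMono g ∧ ∀ i, g i < a then
        (if ∀ i, (Fin.snoc g a : Fin (r + 1) → ℕ) i < n then
          ∏ i, (((Fin.snoc g a : Fin (r + 1) → ℕ) i : ℝ≥0∞) + 1)⁻¹ else 0) else 0) =
          if a < n then esymmInv r a * ((a : ℝ≥0∞) + 1)⁻¹ else 0 := by
      simp only [Fin.forall_fin_succ', Fin.snoc_castSucc, Fin.snoc_last, Fin.prod_univ_castSucc]
      split_ifs with ha
      · rw [← ih, ← ENNReal.tsum_mul_right]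
        refine tsum_congr fun g => ?_
        by_cases hg : StrictMono g ∧ ∀ i, g i < a
        · simp [hg, ha, fun i => (hg.2 i).trans ha]
        · simp [hg]
      · simp [ha]
    simp_rw [ite_and, ENNReal.tsum_ite_strictMono_snoc]
    rw [tsum_congr inner, esymmInv, sum_eq_tsum_indicator]
    simp [Set.indicator_apply]

lemma heightOne_eq_toReal_tsum (a b : ℕ) :
    heightOne a b = (∑' n : ℕ, esymmInv a n * ((n : ℝ≥0∞) + 1)⁻¹ ^ (b + 2)).toReal := by
  rw [heightOne, mzv_eq_toReal_tsum, ENNReal.tsum_ite_strictMono_snoc]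
  congr 1
  refine tsum_congr fun n => ?_
  rw [← tsum_strictMono_lt_eq_esymmInv, ← ENNReal.tsum_mul_right]
  refine tsum_congr fun g => ?_
  split_ifs <;> simp [Fin.prod_univ_castSucc]

/-- `betaNat m k = B(m + 1, k + 1) = ∫₀¹ x^m (1 - x)^k dx`. -/
noncomputable def betaNat (m k : ℕ) : ℝ := (m ! * k ! : ℝ) / (m + k + 1)!

noncomputable def dualKernel (m k : ℕ) : ℝ := (m ! * k ! : ℝ) / (m + k + 2)!

lemma dualKernel_nonneg (m k : ℕ) : 0 ≤ dualKernel m k := by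
  unfold dualKernel; positivity

lemma dualKernel_comm (m k : ℕ) : dualKernel m k = dualKernel k m := by
  rw [dualKernel, dualKernel, mul_comm, add_comm m k]

lemma betaNat_eq_mul_dualKernel (m k : ℕ) : betaNat m k = (m + k + 2) * dualKernel m k := by
  rw [betaNat, dualKernel, Nat.factorial_succ (m + k + 1)]
  push_cast
  field_simp
  ring

lemma betaNat_succ_right (m k : ℕ) : betaNat m (k + 1) = (k + 1) * dualKernel m k := by
  rw [betaNat, dualKernel, Nat.factorial_succ k, ← add_assoc]
  push_cast
  ring

lemma betaNat_zero_right (m : ℕ) : betaNat m 0 = ((m : ℝ) + 1)⁻¹ := by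
  rw [betaNat, Nat.factorial_succ, Nat.factorial_zero]
  push_cast
  field_simp

lemma betaNat_le (m k : ℕ) : betaNat m k ≤ 1 / (k + 1) := by
  rw [betaNat, div_le_div_iff₀ (by positivity) (by positivity), one_mul]
  calc (m ! * k ! : ℝ) * (k + 1) = (m ! * (k + 1)! : ℕ) := by
        push_cast [Nat.factorial_succ]; ring
    _ ≤ (m + (k + 1))! := by
        exact_mod_cast Nat.le_of_dvd (Nat.factorial_pos _)
          (Nat.factorial_mul_factorial_dvd_factorial_add m (k + 1))

lemma tendsto_betaNat (m : ℕ) : Tendsto (betaNat m) atTop (𝓝 0) :=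
  squeeze_zero (fun k => by unfold betaNat; positivity) (betaNat_le m)
    tendsto_one_div_add_atTop_nhds_zero_nat

lemma hasSum_dualKernel_nat_add (m i : ℕ) :
    HasSum (fun j => dualKernel m (j + i)) (betaNat m i / (m + 1)) := by
  have telescope (k : ℕ) :
      betaNat m k / (m + 1) - betaNat m (k + 1) / (m + 1) = dualKernel m k := by
    rw [← sub_div, betaNat_eq_mul_dualKernel, betaNat_succ_right]
    field_simp
    ring
  have anti : Antitone fun j => betaNat m (j + i) / (m + 1) := by
    refine antitone_nat_of_succ_le fun j => sub_nonneg.1 ?_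
    rw [add_right_comm, telescope]
    exact dualKernel_nonneg _ _
  have lim : Tendsto (fun j => betaNat m (j + i) / (m + 1)) atTop (𝓝 0) := by
    simpa using ((tendsto_betaNat m).comp (tendsto_add_atTop_nat i)).div_const ((m : ℝ) + 1)
  simpa [add_right_comm, telescope] using hasSum_sub_succ_of_antitone anti lim

lemma tsum_ofReal_dualKernel_nat_add (m i : ℕ) :
    ∑' j, ENNReal.ofReal (dualKernel m (j + i)) =
      ENNReal.ofReal (betaNat m i) * ((m : ℝ≥0∞) + 1)⁻¹ := by
  have h := hasSum_dualKernel_nat_add m i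
  rw [← ENNReal.ofReal_tsum_of_nonneg (fun j => dualKernel_nonneg _ _) h.summable, h.tsum_eq,
    ENNReal.ofReal_div_of_pos (by positivity), div_eq_mul_inv, ENNReal.ofReal_natCast_add_one]

lemma tsum_dualKernel_mul_esymmInv (m b : ℕ) :
    ∑' k, ENNReal.ofReal (dualKernel m k) * esymmInv b k = ((m : ℝ≥0∞) + 1)⁻¹ ^ (b + 2) := by
  induction b with
  | zero =>
    have h := tsum_ofReal_dualKernel_nat_add m 0
    rw [betaNat_zero_right, ENNReal.ofReal_inv_of_pos (by positivity),
      ENNReal.ofReal_natCast_add_one] at h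
    simpa [esymmInv, pow_two] using h
  | succ b ih =>
    calc ∑' k, ENNReal.ofReal (dualKernel m k) * esymmInv (b + 1) k
        = ∑' i, esymmInv b i * ((i : ℝ≥0∞) + 1)⁻¹ *
            ∑' j, ENNReal.ofReal (dualKernel m (j + (i + 1))) :=
          ENNReal.tsum_mul_sum_range _ _
      _ = ∑' i, ((m : ℝ≥0∞) + 1)⁻¹ * (ENNReal.ofReal (dualKernel m i) * esymmInv b i) := by
          refine tsum_congr fun i => ?_
          rw [tsum_ofReal_dualKernel_nat_add, betaNat_succ_right,
            ENNReal.ofReal_mul (by positivity), ENNReal.ofReal_natCast_add_one]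
          calc esymmInv b i * ((i : ℝ≥0∞) + 1)⁻¹ *
                (((i : ℝ≥0∞) + 1) * ENNReal.ofReal (dualKernel m i) * ((m : ℝ≥0∞) + 1)⁻¹)
              = ((i : ℝ≥0∞) + 1)⁻¹ * ((i : ℝ≥0∞) + 1) *
                  (((m : ℝ≥0∞) + 1)⁻¹ * (ENNReal.ofReal (dualKernel m i) * esymmInv b i)) := by
                ring
            _ = _ := by rw [ENNReal.inv_mul_cancel (by positivity) (by simp), one_mul]
      _ = ((m : ℝ≥0∞) + 1)⁻¹ ^ (b + 1 + 2) := by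
          rw [ENNReal.tsum_mul_left, ih, pow_succ' _ (b + 2)]

lemma tsum_esymmInv_mul_inv_pow_comm (a b : ℕ) :
    ∑' n, esymmInv a n * ((n : ℝ≥0∞) + 1)⁻¹ ^ (b + 2) =
      ∑' n, esymmInv b n * ((n : ℝ≥0∞) + 1)⁻¹ ^ (a + 2) := by
  have expand (a b : ℕ) : ∑' n, esymmInv a n * ((n : ℝ≥0∞) + 1)⁻¹ ^ (b + 2) =
      ∑' n, ∑' k, ENNReal.ofReal (dualKernel n k) * (esymmInv a n * esymmInv b k) := by
    refine tsum_congr fun n => ?_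
    rw [← tsum_dualKernel_mul_esymmInv, ← ENNReal.tsum_mul_left]
    exact tsum_congr fun k => by ring
  rw [expand, expand, ENNReal.tsum_comm]
  exact tsum_congr fun n => tsum_congr fun k => by rw [dualKernel_comm, mul_comm (esymmInv a k)]

theorem heightOne_comm (a b : ℕ) : heightOne a b = heightOne b a := by
  rw [heightOne_eq_toReal_tsum, heightOne_eq_toReal_tsum, tsum_esymmInv_mul_inv_pow_comm]

lemma sum_antidiagonal_neg_one_pow_mul_eq_zero {R : Type*} [Ring R] {n : ℕ}
    (hn : Odd n) {f : ℕ → ℕ → R} (hf : ∀ a b, f a b = f b a) :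
    ∑ p ∈ antidiagonal n, (-1) ^ p.2 * f p.1 p.2 = 0 := by
  refine sum_involution (fun p _ => p.swap) (fun p hp => ?_) (fun p hp _ hfix => ?_)
    (fun p hp => by simpa [add_comm] using hp) (fun p _ => p.swap_swap)
  · rw [HasAntidiagonal.mem_antidiagonal] at hp
    have hodd : Odd (p.1 + p.2) := hp ▸ hn
    rw [Prod.fst_swap, Prod.snd_swap, hf p.2 p.1, ← add_mul]
    rcases Nat.even_or_odd p.2 with hb | hb
    · simp [hb.neg_one_pow, ((Nat.odd_add.1 hodd).2 hb).neg_one_pow]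
    · have ha : Even p.1 := by
        obtain ⟨j, hj⟩ := hodd
        obtain ⟨k, hk⟩ := hb
        exact ⟨j - k, by omega⟩
      simp [hb.neg_one_pow, ha.neg_one_pow]
  · rw [HasAntidiagonal.mem_antidiagonal] at hp
    have hdiag : p.2 = p.1 := congrArg Prod.fst hfix
    exact Nat.not_even_iff_odd.2 hn ⟨p.1, by omega⟩

theorem Zminus_odd_vanishes (m : ℕ) :
    ∑ a ∈ Finset.range (2 * m + 2), (-1 : ℝ) ^ (2 * m + 1 - a) * heightOne a (2 * m + 1 - a) =
      0 := by
  rw [← Finset.Nat.sum_antidiagonal_eq_sum_range_succ (fun a b => (-1 : ℝ) ^ b * heightOne a b)]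
  exact sum_antidiagonal_neg_one_pow_mul_eq_zero (odd_two_mul_add_one m) heightOne_comm
end
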